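/- Fix real parameters c₃ and c ≥ 0 with max(c, |c₃|) ≤ 1, set r = s = 0, and let C = max(c, |c₃|). Then the maximum of F over [0,1] equals (1/2)(1+C)log₂(1+C) + (1/2)(1−C)log₂(1−C); it is attained at z = 1 if c₃² ≥ c² and at z = 0 otherwise. -/

import Mathlib

/-- `H₊(z) = √(c²(1−z²)+(r+c₃z)²)`. -/
noncomputable def Hp (r c₃ c z : ℝ) : ℝ := Real.sqrt (c^2*(1 - z^2) + (r + c₃*z)^2)

/-- `H₋(z) = √(c²(1−z²)+(r−c₃z)²)`. -/
noncomputable def Hm (r c₃ c z : ℝ) : ℝ := Real.sqrt (c^2*(1 - z^2) + (r - c₃*z)^2)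

/-- The one-variable function `F(z)` from the quantum discord of X-states. -/
noncomputable def F (r s c₃ c z : ℝ) : ℝ :=
  (1/4) * (1 + s*z + Hp r c₃ c z) * Real.logb 2 ((1 + s*z + Hp r c₃ c z) / (1 + s*z)) +
  (1/4) * (1 + s*z - Hp r c₃ c z) * Real.logb 2 ((1 + s*z - Hp r c₃ c z) / (1 + s*z)) +
  (1/4) * (1 - s*z + Hm r c₃ c z) * Real.logb 2 ((1 - s*z + Hm r c₃ c z) / (1 - s*z)) +
  (1/4) * (1 - s*z - Hm r c₃ c z) * Real.logb 2 ((1 - s*z - Hm r c₃ c z) / (1 - s*z))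

/-! At `r = s = 0` both square roots `H₊` and `H₋` equal `H(z) = √(c²(1−z²) + c₃²z²)`, and `F`
collapses to `ψ(H(z))` (`ψ = bellDiagCorrelation`), where `ψ(x) = 1 − h((1+x)/2)` with `h` the
binary entropy in bits. Since `h` decreases on `[1/2, 1]`, `ψ` increases on `[0, 1]`; and `H(z)²`
is a convex combination of `c²` and `c₃²`, so `H(z) ≤ max(c, |c₃|)`, with equality at `z = 1`
when `|c₃| ≥ c` and at `z = 0` when `c > |c₃|`. -/

open Real Set

noncomputable def bellDiagCorrelation (x : ℝ) : ℝ :=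
  (1/2) * (1 + x) * logb 2 (1 + x) + (1/2) * (1 - x) * logb 2 (1 - x)

theorem bellDiagCorrelation_eq_one_sub_binEntropy (x : ℝ) :
    bellDiagCorrelation x = 1 - binEntropy ((1 + x) / 2) / log 2 := by
  have hlog2 : log 2 ≠ 0 := (log_pos one_lt_two).ne'
  -- `negMulLog_mul` has no side condition, so this also holds at `a = 0`, unlike `log_div`.
  have hhalf : ∀ a : ℝ, negMulLog (a / 2) = -(1/2) * (a * log a) + a / 2 * log 2 := by
    intro a
    rw [div_eq_mul_inv, negMulLog_mul, negMulLog, negMulLog, log_inv]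
    ring
  rw [binEntropy_eq_negMulLog_add_negMulLog_one_sub, show 1 - (1 + x) / 2 = (1 - x) / 2 by ring,
    hhalf, hhalf, bellDiagCorrelation, logb, logb]
  field_simp
  ring

theorem bellDiagCorrelation_monotoneOn : MonotoneOn bellDiagCorrelation (Icc 0 1) := by
  intro a ha b hb hab
  have hmem : ∀ x ∈ Icc (0:ℝ) 1, (1 + x) / 2 ∈ Icc (2⁻¹ : ℝ) 1 := fun x hx =>
    ⟨by linarith [hx.1], by linarith [hx.2]⟩
  have hent : binEntropy ((1 + b) / 2) ≤ binEntropy ((1 + a) / 2) :=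
    binEntropy_strictAntiOn.antitoneOn (hmem a ha) (hmem b hb) (by linarith)
  rw [bellDiagCorrelation_eq_one_sub_binEntropy, bellDiagCorrelation_eq_one_sub_binEntropy]
  gcongr

theorem F_zero_zero_eq (c₃ c z : ℝ) :
    F 0 0 c₃ c z = bellDiagCorrelation (√(c^2 * (1 - z^2) + c₃^2 * z^2)) := by
  have hp : Hp 0 c₃ c z = √(c^2 * (1 - z^2) + c₃^2 * z^2) := by
    unfold Hp; congr 1; ring
  have hm : Hm 0 c₃ c z = √(c^2 * (1 - z^2) + c₃^2 * z^2) := by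
    unfold Hm; congr 1; ring
  simp only [F, hp, hm, bellDiagCorrelation, zero_mul, add_zero, sub_zero, div_one]
  ring

theorem sqrt_sq_mul_one_sub_add_sq_mul_le_max {a b t : ℝ} (ht₀ : 0 ≤ t) (ht₁ : t ≤ 1) :
    √(a^2 * (1 - t) + b^2 * t) ≤ max |a| |b| := by
  have ha : a^2 ≤ (max |a| |b|)^2 := sq_le_sq.mpr ((le_max_left _ _).trans (le_abs_self _))
  have hb : b^2 ≤ (max |a| |b|)^2 := sq_le_sq.mpr ((le_max_right _ _).trans (le_abs_self _))
  refine sqrt_le_iff.mpr ⟨by positivity, ?_⟩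
  nlinarith [mul_le_mul_of_nonneg_right ha (sub_nonneg.mpr ht₁), mul_le_mul_of_nonneg_right hb ht₀]

theorem F_max_bell_diagonal (c₃ c : ℝ) (hc : 0 ≤ c) (hC : max c |c₃| ≤ 1) :
    (∀ z ∈ Set.Icc (0:ℝ) 1, F 0 0 c₃ c z ≤
      (1/2) * (1 + max c |c₃|) * Real.logb 2 (1 + max c |c₃|) +
      (1/2) * (1 - max c |c₃|) * Real.logb 2 (1 - max c |c₃|)) ∧
    (c^2 ≤ c₃^2 →
      F 0 0 c₃ c 1 =
        (1/2) * (1 + max c |c₃|) * Real.logb 2 (1 + max c |c₃|) +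
        (1/2) * (1 - max c |c₃|) * Real.logb 2 (1 - max c |c₃|)) ∧
    (c₃^2 < c^2 →
      F 0 0 c₃ c 0 =
        (1/2) * (1 + max c |c₃|) * Real.logb 2 (1 + max c |c₃|) +
        (1/2) * (1 - max c |c₃|) * Real.logb 2 (1 - max c |c₃|)) := by
  change (∀ z ∈ Icc (0:ℝ) 1, F 0 0 c₃ c z ≤ bellDiagCorrelation (max c |c₃|)) ∧
    (c^2 ≤ c₃^2 → F 0 0 c₃ c 1 = bellDiagCorrelation (max c |c₃|)) ∧
    (c₃^2 < c^2 → F 0 0 c₃ c 0 = bellDiagCorrelation (max c |c₃|))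
  refine ⟨fun z hz => ?_, fun h => ?_, fun h => ?_⟩
  · have hle : √(c^2 * (1 - z^2) + c₃^2 * z^2) ≤ max c |c₃| := by
      simpa only [abs_of_nonneg hc] using
        sqrt_sq_mul_one_sub_add_sq_mul_le_max (a := c) (b := c₃) (sq_nonneg z)
          (pow_le_one₀ hz.1 hz.2)
    rw [F_zero_zero_eq]
    exact bellDiagCorrelation_monotoneOn ⟨sqrt_nonneg _, hle.trans hC⟩
      ⟨hle.trans' (sqrt_nonneg _), hC⟩ hle
  · have hmax : max c |c₃| = |c₃| := max_eq_right (abs_of_nonneg hc ▸ sq_le_sq.mp h)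
    rw [F_zero_zero_eq, hmax]
    norm_num [sqrt_sq_eq_abs]
  · have hmax : max c |c₃| = c := max_eq_left (abs_of_nonneg hc ▸ sq_lt_sq.mp h).le
    rw [F_zero_zero_eq, hmax]
    norm_num [sqrt_sq hc]
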